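/- arXiv:1401.3373 — 6 statements merged into one kernel-verified Lean document; each statement's English description precedes it below -/
import Mathlib

section
/- If u, X11, X12, X21, X22 are reals with u > 0, max(X21, X22) ≤ u ≤ min(X11, X12), and b is a real with 0 < b ≤ min( -1/(1 - max(X11,X12)/u), 1/(1 - min(X21,X22)/u) ) (where the bounds are interpreted as +∞ when the denominator is 0), then each of the four numbers p11 = 1 + (1 - X11/u)·b, p12 = 1 + (1 - X12/u)·b, p21 = (1 - X21/u)·b, p22 = (1 - X22/u)·b lies in the closed interval [0,1]. -/
/-- Feasibility (Case b > 0) of zero-determinant strategies in a 2×2 iterated game. -/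
theorem stmt_0 (u X11 X12 X21 X22 b : ℝ)
    (hu : 0 < u)
    (hrow2 : max X21 X22 ≤ u) (hrow1 : u ≤ min X11 X12)
    (hstrict1 : u < max X11 X12) (hstrict2 : min X21 X22 < u)
    (hb0 : 0 < b)
    (hb1 : b ≤ min (-1 / (1 - max X11 X12 / u)) (1 / (1 - min X21 X22 / u))) :
    (1 + (1 - X11 / u) * b) ∈ Set.Icc (0:ℝ) 1 ∧
    (1 + (1 - X12 / u) * b) ∈ Set.Icc (0:ℝ) 1 ∧
    ((1 - X21 / u) * b) ∈ Set.Icc (0:ℝ) 1 ∧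
    ((1 - X22 / u) * b) ∈ Set.Icc (0:ℝ) 1 := by
  set M := max X11 X12 with hM
  set m := min X21 X22 with hm
  have hMneg : 1 - M / u < 0 := by
    have : (1:ℝ) < M / u := (one_lt_div hu).2 hstrict1
    linarith
  have hmpos : 0 < 1 - m / u := by
    have : m / u < 1 := (div_lt_one hu).2 hstrict2
    linarith
  have key1 : -1 ≤ (1 - M / u) * b := by
    have h := (le_div_iff_of_neg hMneg).1 (hb1.trans (min_le_left _ _))
    linarith [h]
  have key2 : (1 - m / u) * b ≤ 1 := by
    have h := (le_div_iff₀ hmpos).1 (hb1.trans (min_le_right _ _))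
    linarith [h]
  have h11M : X11 / u ≤ M / u := div_le_div_of_nonneg_right (le_max_left _ _) hu.le
  have h12M : X12 / u ≤ M / u := div_le_div_of_nonneg_right (le_max_right _ _) hu.le
  have hm21 : m / u ≤ X21 / u := div_le_div_of_nonneg_right (min_le_left _ _) hu.le
  have hm22 : m / u ≤ X22 / u := div_le_div_of_nonneg_right (min_le_right _ _) hu.le
  have h11u : (1:ℝ) ≤ X11 / u := (one_le_div hu).2 (hrow1.trans (min_le_left _ _))
  have h12u : (1:ℝ) ≤ X12 / u := (one_le_div hu).2 (hrow1.trans (min_le_right _ _))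
  have h21u : X21 / u ≤ 1 := (div_le_one hu).2 ((le_max_left _ _).trans hrow2)
  have h22u : X22 / u ≤ 1 := (div_le_one hu).2 ((le_max_right _ _).trans hrow2)
  have a11 : (1 - M / u) * b ≤ (1 - X11 / u) * b :=
    mul_le_mul_of_nonneg_right (by linarith) hb0.le
  have a12 : (1 - M / u) * b ≤ (1 - X12 / u) * b :=
    mul_le_mul_of_nonneg_right (by linarith) hb0.le
  have b21 : (1 - X21 / u) * b ≤ (1 - m / u) * b :=
    mul_le_mul_of_nonneg_right (by linarith) hb0.le
  have b22 : (1 - X22 / u) * b ≤ (1 - m / u) * b :=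
    mul_le_mul_of_nonneg_right (by linarith) hb0.le
  have c11 : (1 - X11 / u) * b ≤ 0 := mul_nonpos_of_nonpos_of_nonneg (by linarith) hb0.le
  have c12 : (1 - X12 / u) * b ≤ 0 := mul_nonpos_of_nonpos_of_nonneg (by linarith) hb0.le
  have d21 : 0 ≤ (1 - X21 / u) * b := mul_nonneg (by linarith) hb0.le
  have d22 : 0 ≤ (1 - X22 / u) * b := mul_nonneg (by linarith) hb0.le
  refine ⟨⟨by linarith, by linarith⟩, ⟨by linarith, by linarith⟩,
    ⟨d21, by linarith⟩, ⟨d22, by linarith⟩⟩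
end

section
/- Let M be the 4×4 transition matrix of the 2×2 iterated game with player-X strategy vector p = (p^{1,1}, p^{1,2}, p^{2,1}, p^{2,2}) and any player-Y strategy q ∈ [0,1]⁴. If π = (π₁, π₂, π₃, π₄) is a stationary distribution of M (π M = π, π ≥ 0, Σπᵢ = 1), then π₁(−1 + p^{1,1}) + π₂(−1 + p^{1,2}) + π₃ p^{2,1} + π₄ p^{2,2} = 0. -/
open Matrix

/-- Key linear relation π · m̃_X = 0 for any stationary distribution of the
    2×2 iterated game chain. -/
theorem stmt_6 (p11 p12 p21 p22 q11 q21 q12 q22 : ℝ)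
    (hp11 : p11 ∈ Set.Icc (0:ℝ) 1) (hp12 : p12 ∈ Set.Icc (0:ℝ) 1)
    (hp21 : p21 ∈ Set.Icc (0:ℝ) 1) (hp22 : p22 ∈ Set.Icc (0:ℝ) 1)
    (hq11 : q11 ∈ Set.Icc (0:ℝ) 1) (hq21 : q21 ∈ Set.Icc (0:ℝ) 1)
    (hq12 : q12 ∈ Set.Icc (0:ℝ) 1) (hq22 : q22 ∈ Set.Icc (0:ℝ) 1)
    (M : Matrix (Fin 4) (Fin 4) ℝ)
    (hM : M = !![p11*q11, p11*(1-q11), (1-p11)*q11, (1-p11)*(1-q11);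
                 p12*q21, p12*(1-q21), (1-p12)*q21, (1-p12)*(1-q21);
                 p21*q12, p21*(1-q12), (1-p21)*q12, (1-p21)*(1-q12);
                 p22*q22, p22*(1-q22), (1-p22)*q22, (1-p22)*(1-q22)])
    (π : Fin 4 → ℝ)
    (hstat : π ᵥ* M = π) (hpos : ∀ i, 0 ≤ π i) (hsum : (∑ i, π i) = 1) :
    π 0 * (-1 + p11) + π 1 * (-1 + p12) + π 2 * p21 + π 3 * p22 = 0 := by
  have h0 := congrFun hstat 0
  have h1 := congrFun hstat 1
  subst hM
  simp [vecMul, dotProduct, Fin.sum_univ_four] at h0 h1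
  nlinarith [h0, h1]
end

section
/- In the 2×2 iterated game, suppose player X uses strategy p^{1,1} = 1 + (1 − X11/u)b, p^{1,2} = 1 + (1 − X12/u)b, p^{2,1} = (1 − X21/u)b, p^{2,2} = (1 − X22/u)b for some u > 0 and b ≠ 0, with all four values in [0,1]. Then for ANY stationary distribution π of the resulting transition matrix M (for any opponent strategy q ∈ [0,1]⁴), the long-term payoff π₁X11 + π₂X12 + π₃X21 + π₄X22 equals u. -/
open Matrix

/-- Payoff fixing: if player X uses the zero-determinant strategy for target u,
    then every stationary distribution of the induced chain yields long-term payoff u. -/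
theorem stmt_7 (u b X11 X12 X21 X22 : ℝ) (hu : 0 < u) (hb : b ≠ 0)
    (p11 p12 p21 p22 : ℝ)
    (hp11 : p11 = 1 + (1 - X11 / u) * b) (hp12 : p12 = 1 + (1 - X12 / u) * b)
    (hp21 : p21 = (1 - X21 / u) * b) (hp22 : p22 = (1 - X22 / u) * b)
    (hp11' : p11 ∈ Set.Icc (0:ℝ) 1) (hp12' : p12 ∈ Set.Icc (0:ℝ) 1)
    (hp21' : p21 ∈ Set.Icc (0:ℝ) 1) (hp22' : p22 ∈ Set.Icc (0:ℝ) 1)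
    (q11 q21 q12 q22 : ℝ)
    (hq11 : q11 ∈ Set.Icc (0:ℝ) 1) (hq21 : q21 ∈ Set.Icc (0:ℝ) 1)
    (hq12 : q12 ∈ Set.Icc (0:ℝ) 1) (hq22 : q22 ∈ Set.Icc (0:ℝ) 1)
    (M : Matrix (Fin 4) (Fin 4) ℝ)
    (hM : M = !![p11*q11, p11*(1-q11), (1-p11)*q11, (1-p11)*(1-q11);
                 p12*q21, p12*(1-q21), (1-p12)*q21, (1-p12)*(1-q21);
                 p21*q12, p21*(1-q12), (1-p21)*q12, (1-p21)*(1-q12);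
                 p22*q22, p22*(1-q22), (1-p22)*q22, (1-p22)*(1-q22)])
    (π : Fin 4 → ℝ)
    (hstat : π ᵥ* M = π) (hpos : ∀ i, 0 ≤ π i) (hsum : (∑ i, π i) = 1) :
    π 0 * X11 + π 1 * X12 + π 2 * X21 + π 3 * X22 = u := by
  subst hM
  have h0 := congrFun hstat 0
  have h1 := congrFun hstat 1
  simp [Matrix.vecMul, dotProduct, Fin.sum_univ_four] at h0 h1
  rw [Fin.sum_univ_four] at hsum
  have hu' : u ≠ 0 := ne_of_gt hu
  -- π·p = π0 + π1
  have key : π 0 * p11 + π 1 * p12 + π 2 * p21 + π 3 * p22 = π 0 + π 1 := by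
    nlinarith [h0, h1]
  rw [hp11, hp12, hp21, hp22] at key
  field_simp at key
  rcases mul_eq_mul_right_iff.mp (by linear_combination b * u * hsum - key :
      (π 0 * X11 + π 1 * X12 + π 2 * X21 + π 3 * X22) * b = u * b) with h | h
  · exact h
  · exact absurd h hb
end

section
/- In the spectrum-sharing game with row-player payoffs X11 = θR, X12 = R, X21 = X22 = 0 (0 < θ < 1, R > 0), if a target long-term rate R̄ > 0 is achievable via a zero-determinant strategy (i.e., there exists b ≠ 0 making all four probabilities 1 + (1 − θR/R̄)b, 1 + (1 − R/R̄)b, (1 − 0/R̄)b, (1 − 0/R̄)b lie in [0,1]), then necessarily R̄ ≤ θR and b > 0. -/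
/-- Necessity: in the spectrum-sharing game, an achievable zero-determinant target
    rate satisfies R̄ ≤ θR and requires b > 0. -/
theorem stmt_9 (θ R Rbar : ℝ) (hθ0 : 0 < θ) (hθ1 : θ < 1) (hR : 0 < R)
    (hRbar : 0 < Rbar)
    (b : ℝ) (hb : b ≠ 0)
    (h1 : (1 + (1 - θ * R / Rbar) * b) ∈ Set.Icc (0:ℝ) 1)
    (h2 : (1 + (1 - R / Rbar) * b) ∈ Set.Icc (0:ℝ) 1)
    (h3 : ((1 - 0 / Rbar) * b) ∈ Set.Icc (0:ℝ) 1)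
    (h4 : ((1 - 0 / Rbar) * b) ∈ Set.Icc (0:ℝ) 1) :
    Rbar ≤ θ * R ∧ 0 < b := by
  obtain ⟨h3a, h3b⟩ := h3
  simp only [zero_div, sub_zero, one_mul] at h3a
  have hbpos : 0 < b := lt_of_le_of_ne h3a (Ne.symm hb)
  refine ⟨?_, hbpos⟩
  have h1b := h1.2
  have hcoef : 1 - θ * R / Rbar ≤ 0 := by
    by_contra hc
    push_neg at hc
    nlinarith
  have : 1 ≤ θ * R / Rbar := by linarith
  calc Rbar = Rbar * 1 := (mul_one _).symm
    _ ≤ Rbar * (θ * R / Rbar) := by nlinarith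
    _ = θ * R := by field_simp
end

section
/- Let S be a finite nonempty index set, and for k ∈ S let σ_k > 0, h_k > 0, and Λ > 0. Define K = Λ / (Σ_{k∈S} σ_k/h_k + |S|·Λ) and λ_k = K·(σ_k/h_k + Λ). Then Σ_{k∈S} λ_k = Λ, each λ_k > 0, and for all k, l ∈ S: h_k λ_k / (σ_k + h_k(Λ − λ_k)) = h_l λ_l / (σ_l + h_l(Λ − λ_l)); in fact each of these SINR values equals K/(1 − K). -/
/-- Max-min (SINR-equalizing) power allocation for a single service provider. -/
theorem stmt_15 {ι : Type*} (S : Finset ι) (hS : S.Nonempty)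
    (σ h : ι → ℝ) (Λ : ℝ)
    (hσ : ∀ k ∈ S, 0 < σ k) (hh : ∀ k ∈ S, 0 < h k) (hΛ : 0 < Λ)
    (K : ℝ) (hK : K = Λ / (∑ k ∈ S, σ k / h k + S.card * Λ))
    (lam : ι → ℝ) (hlam : ∀ k, lam k = K * (σ k / h k + Λ)) :
    (∑ k ∈ S, lam k) = Λ ∧
    (∀ k ∈ S, 0 < lam k) ∧
    (∀ k ∈ S, ∀ l ∈ S,
      h k * lam k / (σ k + h k * (Λ - lam k)) = h l * lam l / (σ l + h l * (Λ - lam l))) ∧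
    (∀ k ∈ S, h k * lam k / (σ k + h k * (Λ - lam k)) = K / (1 - K)) := by
  set D : ℝ := ∑ k ∈ S, σ k / h k + S.card * Λ with hD
  have hsumpos : 0 < ∑ k ∈ S, σ k / h k :=
    Finset.sum_pos (fun k hk => div_pos (hσ k hk) (hh k hk)) hS
  have hcard : (1 : ℝ) ≤ S.card := by
    have := Finset.card_pos.mpr hS
    exact_mod_cast this
  have hΛcard : Λ ≤ (S.card : ℝ) * Λ := le_mul_of_one_le_left hΛ.le hcard
  have hDpos : 0 < D := by rw [hD]; linarith
  have hKpos : 0 < K := by rw [hK]; exact div_pos hΛ hDpos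
  have hK1 : K < 1 := by
    rw [hK]
    rw [div_lt_one hDpos, hD]
    linarith
  have hsum : (∑ k ∈ S, lam k) = Λ := by
    have : (∑ k ∈ S, lam k) = K * D := by
      simp only [hlam, hD, mul_add, Finset.sum_add_distrib, Finset.sum_const,
        nsmul_eq_mul, Finset.mul_sum]
      ring
    rw [this, hK, div_mul_cancel₀ _ (ne_of_gt hDpos)]
  have hpos : ∀ k ∈ S, 0 < lam k := by
    intro k hk
    rw [hlam]
    have := div_pos (hσ k hk) (hh k hk)
    positivity
  have hsinr : ∀ k ∈ S, h k * lam k / (σ k + h k * (Λ - lam k)) = K / (1 - K) := by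
    intro k hk
    have hhk := hh k hk
    have hσk := hσ k hk
    have hnum : h k * lam k = K * (σ k + h k * Λ) := by
      have : h k * (σ k / h k) = σ k := mul_div_cancel₀ _ (ne_of_gt hhk)
      rw [hlam]; nlinarith [this]
    have hden : σ k + h k * (Λ - lam k) = (1 - K) * (σ k + h k * Λ) := by
      have : h k * (σ k / h k) = σ k := mul_div_cancel₀ _ (ne_of_gt hhk)
      rw [hlam]; nlinarith [this]
    rw [hnum, hden]
    rw [mul_div_mul_right _ _ (by positivity : σ k + h k * Λ ≠ 0)]
  refine ⟨hsum, hpos, fun k hk l hl => ?_, hsinr⟩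
  rw [hsinr k hk, hsinr l hl]
end

section
/- Let S be finite nonempty, σ_k, h_k, g_k > 0 for k ∈ S, and Λ, Λ' > 0 (own and interferer power budgets). Define K̃ = Λ / (Σ_{k∈S} (σ_k + Λ'g_k)/h_k + |S|Λ) and λ_k = K̃·(σ_k/h_k + Λ + Λ'·g_k/h_k). Then Σ λ_k = Λ and for all k ∈ S the SINR h_k λ_k / (σ_k + h_k(Λ − λ_k) + g_k Λ') equals K̃/(1 − K̃), which is the same constant for all k. -/
/-- SINR-equalizing power allocation in the presence of a second interfering
    service provider. -/
theorem stmt_16 {ι : Type*} (S : Finset ι) (hS : S.Nonempty)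
    (σ h g : ι → ℝ) (Λ Λ' : ℝ)
    (hσ : ∀ k ∈ S, 0 < σ k) (hh : ∀ k ∈ S, 0 < h k) (hg : ∀ k ∈ S, 0 < g k)
    (hΛ : 0 < Λ) (hΛ' : 0 < Λ')
    (Kt : ℝ) (hKt : Kt = Λ / (∑ k ∈ S, (σ k + Λ' * g k) / h k + S.card * Λ))
    (lam : ι → ℝ) (hlam : ∀ k, lam k = Kt * (σ k / h k + Λ + Λ' * (g k / h k))) :
    (∑ k ∈ S, lam k) = Λ ∧
    (∀ k ∈ S,
      h k * lam k / (σ k + h k * (Λ - lam k) + g k * Λ') = Kt / (1 - Kt)) := by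
  set D : ℝ := ∑ k ∈ S, (σ k + Λ' * g k) / h k + S.card * Λ with hD
  have hsumpos : 0 < ∑ k ∈ S, (σ k + Λ' * g k) / h k := by
    apply Finset.sum_pos (fun k hk => ?_) hS
    have := hσ k hk; have := hg k hk; have := hh k hk
    positivity
  have hcard : (1 : ℝ) ≤ S.card := by
    exact_mod_cast Finset.card_pos.mpr hS
  have hDpos : 0 < D := by
    rw [hD]
    have : 0 < (S.card : ℝ) * Λ := by positivity
    linarith
  have hKtpos : 0 < Kt := hKt ▸ div_pos hΛ hDpos
  have hKtlt : Kt < 1 := by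
    rw [hKt, div_lt_one hDpos, hD]
    nlinarith
  have hKD : Kt * D = Λ := by
    rw [hKt]; exact div_mul_cancel₀ Λ hDpos.ne'
  have hsum : (∑ k ∈ S, lam k) = Λ := by
    have hpt : ∀ k ∈ S, lam k = Kt * ((σ k + Λ' * g k) / h k + Λ) := by
      intro k hk
      have hk0 := (hh k hk).ne'
      have : σ k / h k + Λ + Λ' * (g k / h k) = (σ k + Λ' * g k) / h k + Λ := by
        field_simp; ring
      rw [hlam k, this]
    calc (∑ k ∈ S, lam k) = ∑ k ∈ S, Kt * ((σ k + Λ' * g k) / h k + Λ) :=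
          Finset.sum_congr rfl hpt
      _ = Kt * D := by
          rw [← Finset.mul_sum, Finset.sum_add_distrib, Finset.sum_const,
            nsmul_eq_mul, hD]
      _ = Λ := hKD
  refine ⟨hsum, fun k hk => ?_⟩
  have hk0 := (hh k hk).ne'
  have hcpos : 0 < σ k / h k + Λ + Λ' * (g k / h k) := by
    have := hσ k hk; have := hg k hk; have := hh k hk
    positivity
  have hden : σ k + h k * (Λ - lam k) + g k * Λ'
      = h k * (σ k / h k + Λ + Λ' * (g k / h k)) * (1 - Kt) := by
    rw [hlam k]; field_simp; ring
  rw [hden, hlam k]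
  rw [div_eq_div_iff (ne_of_gt (mul_pos (mul_pos (hh k hk) hcpos) (by linarith))) (ne_of_gt (by linarith))]
  ring
end
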